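/- arXiv:2108.05992 — 2 statements merged into one kernel-verified Lean document; each statement's English description precedes it below -/
import Mathlib

section
/- Let P(z,w) be a nonconstant complex polynomial in two variables of degree d. If there exist two non-parallel complex lines in ℂ² on which P never vanishes, then there are at most d complex lines in ℂ² disjoint from the zero set of P. -/
/-!
A polynomial without zeros on a complex line is constant along it (fundamental theorem of
algebra). Two non-parallel lines meet, so `P` takes a single value `c` on both given lines, and
every line avoiding the zeros of `P` is non-parallel to one of them, hence meets it and also
carries the value `c`. All such lines therefore lie in the zero set of the nonzero polynomial
`P - c`, of degree at most `d`. A nonzero polynomial `f` vanishes on at most `deg f` lines: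
vanishing on a line forces divisibility by the line's linear equation, and any other line in
the zero set of `f` lies in the zero set of the quotient, whose degree is smaller.
-/

/-- A complex line in `ℂ²` (points modeled as `Fin 2 → ℂ`). -/
def IsComplexLine (L : Set (Fin 2 → ℂ)) : Prop :=
  ∃ a v : Fin 2 → ℂ, v ≠ 0 ∧ L = {p | ∃ t : ℂ, p = a + t • v}

open MvPolynomial

noncomputable section

section Plane

variable {K : Type*} [Field K]

def det₂ (v u : Fin 2 → K) : K := v 0 * u 1 - v 1 * u 0

def lineThrough (a v : Fin 2 → K) : Set (Fin 2 → K) := {p | ∃ t : K, p = a + t • v}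

lemma exists_det₂_eq_one {v : Fin 2 → K} (hv : v ≠ 0) : ∃ u, det₂ v u = 1 := by
  by_cases h0 : v 0 = 0
  · have h1 : v 1 ≠ 0 := fun h1 => hv (funext <| Fin.forall_fin_two.2 ⟨h0, h1⟩)
    exact ⟨![-(v 1)⁻¹, 0], by simp [det₂, h1]⟩
  · exact ⟨![0, (v 0)⁻¹], by simp [det₂, h0]⟩

lemma exists_eq_smul_of_det₂_eq_zero {v u : Fin 2 → K} (hv : v ≠ 0) (h : det₂ v u = 0) :
    ∃ c : K, u = c • v := by
  obtain ⟨w, hw⟩ := exists_det₂_eq_one hv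
  refine ⟨det₂ u w, funext <| Fin.forall_fin_two.2 ⟨?_, ?_⟩⟩ <;>
    simp only [det₂, Pi.smul_apply, smul_eq_mul] at h hw ⊢
  · linear_combination (-u 0) * hw + w 0 * h
  · linear_combination (-u 1) * hw + w 1 * h

lemma det₂_ne_zero_or_det₂_ne_zero {v₁ v₂ w : Fin 2 → K} (h : det₂ v₁ v₂ ≠ 0) (hw : w ≠ 0) :
    det₂ v₁ w ≠ 0 ∨ det₂ v₂ w ≠ 0 := by
  by_contra! h'
  obtain ⟨h₁, h₂⟩ := h'
  refine hw (funext <| Fin.forall_fin_two.2 ⟨?_, ?_⟩) <;>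
    refine (mul_eq_zero.mp ?_).resolve_left h <;>
    simp only [det₂] at h₁ h₂ ⊢
  · linear_combination v₂ 0 * h₁ - v₁ 0 * h₂
  · linear_combination v₂ 1 * h₁ - v₁ 1 * h₂

lemma exists_add_smul_eq_add_smul (a b : Fin 2 → K) {v u : Fin 2 → K} (h : det₂ v u ≠ 0) :
    ∃ s t : K, a + s • v = b + t • u := by
  refine ⟨det₂ (b - a) u / det₂ v u, det₂ (b - a) v / det₂ v u,
    funext <| Fin.forall_fin_two.2 ⟨?_, ?_⟩⟩ <;>
  · have h' : u 1 * v 0 - u 0 * v 1 ≠ 0 := by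
      rw [det₂] at h; contrapose! h; linear_combination h
    simp only [det₂, Pi.add_apply, Pi.smul_apply, Pi.sub_apply, smul_eq_mul]
    field_simp
    ring

lemma lineThrough_eq_of_subset {a v b u : Fin 2 → K} (hu : u ≠ 0)
    (h : lineThrough b u ⊆ lineThrough a v) : lineThrough b u = lineThrough a v := by
  obtain ⟨t₀, ht₀⟩ := h (show b ∈ lineThrough b u from ⟨0, by simp⟩)
  obtain ⟨t₁, ht₁⟩ := h (show b + u ∈ lineThrough b u from ⟨1, by simp⟩)
  have hu' : u = (t₁ - t₀) • v := by
    rw [sub_smul, ← add_sub_add_left_eq_sub _ _ a, ← ht₀, ← ht₁, add_sub_cancel_left]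
  have hne : t₁ - t₀ ≠ 0 := by
    rintro h0
    rw [h0, zero_smul] at hu'
    exact hu hu'
  refine h.antisymm ?_
  rintro _ ⟨s, rfl⟩
  refine ⟨(s - t₀) / (t₁ - t₀), ?_⟩
  rw [hu', smul_smul, div_mul_cancel₀ _ hne, ht₀, sub_smul]
  abel

end Plane

lemma MvPolynomial.eval_aeval {R σ τ : Type*} [CommRing R] (x : τ → R)
    (g : σ → MvPolynomial τ R) (f : MvPolynomial σ R) :
    eval x (aeval g f) = eval (fun i => eval x (g i)) f := by
  induction f using MvPolynomial.induction_on <;> simp_all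

lemma MvPolynomial.X_zero_dvd_of_eval_eq_zero {R : Type*} [CommRing R] [IsDomain R] [Infinite R]
    {n : ℕ} {f : MvPolynomial (Fin (n + 1)) R} (h : ∀ s : Fin n → R, eval (Fin.cons 0 s) f = 0) :
    X 0 ∣ f := by
  have hcoeff : (finSuccEquiv R n f).coeff 0 = 0 := MvPolynomial.funext fun s => by
    rw [map_zero, ← Polynomial.coeff_map, Polynomial.coeff_zero_eq_eval_zero,
      ← eval_eq_eval_mv_eval', h]
  have := map_dvd (finSuccEquiv R n).symm (Polynomial.X_dvd_iff.mpr hcoeff)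
  rwa [← finSuccEquiv_X_zero, AlgEquiv.symm_apply_apply, AlgEquiv.symm_apply_apply] at this

section LineForm

variable {K : Type*} [Field K]

def lineForm (a v : Fin 2 → K) : MvPolynomial (Fin 2) K :=
  C (v 0) * (X 1 - C (a 1)) - C (v 1) * (X 0 - C (a 0))

lemma eval_lineForm (a v p : Fin 2 → K) : eval p (lineForm a v) = det₂ v (p - a) := by
  simp [lineForm, det₂]

lemma mem_lineThrough_of_eval_lineForm_eq_zero {a v p : Fin 2 → K} (hv : v ≠ 0)
    (h : eval p (lineForm a v) = 0) : p ∈ lineThrough a v := by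
  obtain ⟨t, ht⟩ := exists_eq_smul_of_det₂_eq_zero hv ((eval_lineForm a v p).symm.trans h)
  exact ⟨t, by rw [← ht, add_sub_cancel]⟩

lemma totalDegree_lineForm_pos {a v : Fin 2 → K} (hv : v ≠ 0) :
    0 < (lineForm a v).totalDegree := by
  obtain ⟨u, hu⟩ := exists_det₂_eq_one hv
  by_contra! h0
  have hC := totalDegree_eq_zero_iff_eq_C.mp (Nat.le_zero.mp h0)
  have h : det₂ v (a - a) = det₂ v (a + u - a) := by
    rw [← eval_lineForm, ← eval_lineForm, hC, eval_C, eval_C]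
  rw [sub_self, add_sub_cancel_left, hu] at h
  simp [det₂] at h

lemma lineForm_dvd [Infinite K] {a v : Fin 2 → K} (hv : v ≠ 0) {f : MvPolynomial (Fin 2) K}
    (h : ∀ t : K, eval (a + t • v) f = 0) : lineForm a v ∣ f := by
  obtain ⟨u, hu⟩ := exists_det₂_eq_one hv
  -- In the coordinates `x ↦ a + x 1 • v + x 0 • u` the line becomes `{x 0 = 0}`; by Cramer's
  -- rule (`det₂ v u = 1`) the inverse change of coordinates is `x ↦ (lineForm a v, -lineForm a u)`.
  set g : Fin 2 → MvPolynomial (Fin 2) K := fun i => C (a i) + X 1 * C (v i) + X 0 * C (u i)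
  set k : Fin 2 → MvPolynomial (Fin 2) K := ![lineForm a v, -lineForm a u]
  have hX : X 0 ∣ aeval g f := X_zero_dvd_of_eval_eq_zero fun s => by
    have hpt : (fun i => eval (Fin.cons 0 s) (g i)) = a + s 0 • v := funext fun i => by simp [g]
    rw [eval_aeval, hpt, h]
  have hkg : aeval k (aeval g f) = f := MvPolynomial.funext fun x => by
    have hpt : (fun j => eval (fun i => eval x (k i)) (g j)) = x := by
      simp only [det₂] at hu
      refine funext <| Fin.forall_fin_two.2 ⟨?_, ?_⟩ <;>
        simp only [g, k, map_add, map_mul, map_neg, eval_C, eval_X, eval_lineForm, det₂,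
          Pi.sub_apply, Matrix.cons_val_zero, Matrix.cons_val_one, Matrix.cons_val_fin_one]
      · linear_combination (x 0 - a 0) * hu
      · linear_combination (x 1 - a 1) * hu
    rw [eval_aeval, eval_aeval, hpt]
  have := map_dvd (aeval k) hX
  rwa [hkg, aeval_X] at this

end LineForm

section Restriction

variable {R σ : Type*} [CommRing R]

def restrictLine (b u : σ → R) : MvPolynomial σ R →ₐ[R] Polynomial R :=
  aeval fun i => Polynomial.C (b i) + Polynomial.X * Polynomial.C (u i)

lemma eval_restrictLine (b u : σ → R) (f : MvPolynomial σ R) (t : R) :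
    (restrictLine b u f).eval t = eval (b + t • u) f := by
  induction f using MvPolynomial.induction_on <;> simp_all [restrictLine, mul_comm t]

lemma restrictLine_eq_zero_iff [IsDomain R] [Infinite R] {b u : σ → R} {f : MvPolynomial σ R} :
    restrictLine b u f = 0 ↔ ∀ t : R, eval (b + t • u) f = 0 := by
  refine ⟨fun h t => ?_, fun h => Polynomial.funext fun t => ?_⟩
  · rw [← eval_restrictLine, h, Polynomial.eval_zero]
  · rw [eval_restrictLine, h, Polynomial.eval_zero]

lemma eval_add_smul_eq_of_forall_ne_zero {K : Type*} [Field K] [IsAlgClosed K]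
    {b u : σ → K} {f : MvPolynomial σ K} (h : ∀ t : K, eval (b + t • u) f ≠ 0) (t : K) :
    eval (b + t • u) f = eval b f := by
  have hdeg : (restrictLine b u f).degree = 0 := by
    by_contra hdeg
    obtain ⟨z, hz⟩ := IsAlgClosed.exists_root _ hdeg
    exact h z (by rwa [← eval_restrictLine])
  have hC := Polynomial.eq_C_of_degree_le_zero hdeg.le
  have h0 := eval_restrictLine b u f 0
  rw [zero_smul, add_zero] at h0
  rw [← eval_restrictLine, ← h0, hC, Polynomial.eval_C, Polynomial.eval_C]

end Restriction

lemma eval_add_smul_eq_of_det₂_ne_zero {K : Type*} [Field K] [IsAlgClosed K]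
    {f : MvPolynomial (Fin 2) K} {a v b w : Fin 2 → K} {c : K} (hD : det₂ v w ≠ 0)
    (hL : ∀ t : K, eval (a + t • v) f = c) (hM : ∀ t : K, eval (b + t • w) f ≠ 0) (t : K) :
    eval (b + t • w) f = c := by
  obtain ⟨s, t₀, hst⟩ := exists_add_smul_eq_add_smul a b hD
  rw [eval_add_smul_eq_of_forall_ne_zero hM, ← eval_add_smul_eq_of_forall_ne_zero hM t₀, ← hst,
    hL]

def zeroLines (f : MvPolynomial (Fin 2) ℂ) : Set (Set (Fin 2 → ℂ)) :=
  {L | IsComplexLine L ∧ ∀ p ∈ L, eval p f = 0}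

lemma zeroLines_mul_subset (f g : MvPolynomial (Fin 2) ℂ) :
    zeroLines (f * g) ⊆ zeroLines f ∪ zeroLines g := by
  rintro _ ⟨⟨b, w, hw, rfl⟩, hL⟩
  have hfg : restrictLine b w f * restrictLine b w g = 0 := by
    rw [← map_mul, restrictLine_eq_zero_iff]
    exact fun t => hL _ ⟨t, rfl⟩
  refine (mul_eq_zero.mp hfg).imp (fun h => ⟨⟨b, w, hw, rfl⟩, ?_⟩)
    (fun h => ⟨⟨b, w, hw, rfl⟩, ?_⟩) <;>
  · rintro _ ⟨t, rfl⟩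
    exact restrictLine_eq_zero_iff.mp h t

lemma zeroLines_lineForm_subset {a v : Fin 2 → ℂ} (hv : v ≠ 0) :
    zeroLines (lineForm a v) ⊆ {lineThrough a v} := by
  rintro _ ⟨⟨b, w, hw, rfl⟩, hL⟩
  exact lineThrough_eq_of_subset hw fun p hp =>
    mem_lineThrough_of_eval_lineForm_eq_zero hv (hL p hp)

theorem zeroLines_finite_and_ncard_le {f : MvPolynomial (Fin 2) ℂ} (hf : f ≠ 0) :
    (zeroLines f).Finite ∧ (zeroLines f).ncard ≤ f.totalDegree := by
  obtain ⟨n, hn⟩ : ∃ n, f.totalDegree = n := ⟨_, rfl⟩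
  induction n using Nat.strong_induction_on generalizing f with
  | _ n ih =>
  subst hn
  rcases (zeroLines f).eq_empty_or_nonempty with hempty | ⟨_, ⟨a, v, hv, rfl⟩, hL⟩
  · simp [hempty]
  obtain ⟨g, rfl⟩ := lineForm_dvd hv fun t => hL _ ⟨t, rfl⟩
  have hg : g ≠ 0 := right_ne_zero_of_mul hf
  have hdeg : (lineForm a v * g).totalDegree = (lineForm a v).totalDegree + g.totalDegree :=
    totalDegree_mul_of_isDomain (left_ne_zero_of_mul hf) hg
  have hpos := totalDegree_lineForm_pos (a := a) hv
  obtain ⟨hfin, hcard⟩ := ih g.totalDegree (by omega) hg rfl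
  have hsub : zeroLines (lineForm a v * g) ⊆ {lineThrough a v} ∪ zeroLines g :=
    (zeroLines_mul_subset _ _).trans (Set.union_subset_union_left _ (zeroLines_lineForm_subset hv))
  have hfin' := (Set.finite_singleton (lineThrough a v)).union hfin
  refine ⟨hfin'.subset hsub, ?_⟩
  calc (zeroLines (lineForm a v * g)).ncard
      ≤ ({lineThrough a v} ∪ zeroLines g).ncard := Set.ncard_le_ncard hsub hfin'
    _ ≤ 1 + (zeroLines g).ncard := by
      simpa only [Set.ncard_singleton] using Set.ncard_union_le {lineThrough a v} (zeroLines g)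
    _ ≤ (lineForm a v * g).totalDegree := by omega

theorem stmt_0_general (P : MvPolynomial (Fin 2) ℂ) (d : ℕ) (hd : P.totalDegree = d)
    (hnc : ¬∃ c : ℂ, P = MvPolynomial.C c)
    (a₁ v₁ a₂ v₂ : Fin 2 → ℂ) (hv₁ : v₁ ≠ 0)
    (hpar : ¬∃ c : ℂ, v₂ = c • v₁)
    (h₁ : ∀ t : ℂ, MvPolynomial.eval (a₁ + t • v₁) P ≠ 0)
    (h₂ : ∀ t : ℂ, MvPolynomial.eval (a₂ + t • v₂) P ≠ 0) :
    {L : Set (Fin 2 → ℂ) | IsComplexLine L ∧ ∀ p ∈ L, MvPolynomial.eval p P ≠ 0}.Finite ∧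
    {L : Set (Fin 2 → ℂ) | IsComplexLine L ∧ ∀ p ∈ L, MvPolynomial.eval p P ≠ 0}.ncard ≤ d := by
  have hD : det₂ v₁ v₂ ≠ 0 := fun h => hpar (exists_eq_smul_of_det₂_eq_zero hv₁ h)
  set c := eval a₁ P
  have hc₁ : ∀ t, eval (a₁ + t • v₁) P = c := eval_add_smul_eq_of_forall_ne_zero h₁
  have hc₂ : ∀ t, eval (a₂ + t • v₂) P = c := eval_add_smul_eq_of_det₂_ne_zero hD hc₁ h₂
  have hsub : {L : Set (Fin 2 → ℂ) | IsComplexLine L ∧ ∀ p ∈ L, eval p P ≠ 0} ⊆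
      zeroLines (P - C c) := by
    rintro _ ⟨⟨b, w, hw, rfl⟩, hL⟩
    refine ⟨⟨b, w, hw, rfl⟩, ?_⟩
    rintro _ ⟨t, rfl⟩
    have hL' : ∀ t, eval (b + t • w) P ≠ 0 := fun t => hL _ ⟨t, rfl⟩
    rw [map_sub, eval_C, sub_eq_zero]
    rcases det₂_ne_zero_or_det₂_ne_zero hD hw with h | h
    · exact eval_add_smul_eq_of_det₂_ne_zero h hc₁ hL' t
    · exact eval_add_smul_eq_of_det₂_ne_zero h hc₂ hL' t
  have hR : P - C c ≠ 0 := fun h => hnc ⟨c, sub_eq_zero.mp h⟩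
  obtain ⟨hfin, hcard⟩ := zeroLines_finite_and_ncard_le hR
  exact ⟨hfin.subset hsub,
    (Set.ncard_le_ncard hsub hfin).trans (hcard.trans (hd ▸ totalDegree_sub_C_le P c))⟩

theorem stmt_0 (P : MvPolynomial (Fin 2) ℂ) (d : ℕ) (hd : P.totalDegree = d)
    (hnc : ¬∃ c : ℂ, P = MvPolynomial.C c)
    (a₁ v₁ a₂ v₂ : Fin 2 → ℂ) (hv₁ : v₁ ≠ 0) (hv₂ : v₂ ≠ 0)
    (hpar : ¬∃ c : ℂ, v₂ = c • v₁)
    (h₁ : ∀ t : ℂ, MvPolynomial.eval (a₁ + t • v₁) P ≠ 0)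
    (h₂ : ∀ t : ℂ, MvPolynomial.eval (a₂ + t • v₂) P ≠ 0) :
    {L : Set (Fin 2 → ℂ) | IsComplexLine L ∧ ∀ p ∈ L, MvPolynomial.eval p P ≠ 0}.Finite ∧
    {L : Set (Fin 2 → ℂ) | IsComplexLine L ∧ ∀ p ∈ L, MvPolynomial.eval p P ≠ 0}.ncard ≤ d :=
  stmt_0_general P d hd hnc a₁ v₁ a₂ v₂ hv₁ hpar h₁ h₂
end
end

section
/- Let P be a nonconstant complex polynomial in two variables. Then either (i) at most finitely many complex lines in ℂ² are disjoint from the zero set of P, or (ii) there is a complex line L₀ such that P is constant on every line parallel to L₀, and every complex line not parallel to L₀ meets the zero set of P. -/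
/-!
If `P` does not vanish on the line `a + t • v`, then `t ↦ P (a + t • v)` is a univariate polynomial
without roots, hence constant.

If infinitely many lines avoiding the zero set are parallel to `v`, a transversal through any
point `x` meets them in infinitely many points where `s ↦ P (x + s • u + t • v) - P (x + s • u)`
vanishes, so `P` is invariant under translation by `v`. If `P` were also constant on a line in
another direction, every point would be a `v`-translate of a point of that line, and `P` would be
constant.

Otherwise every direction is shared by finitely many avoiding lines. All avoiding lines not
parallel to a fixed one `L₀` meet `L₀`, so `P` takes the same value `c` on them, and `P - c`
vanishes on infinitely many lines with finitely many in each direction; such a polynomial is zero.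
-/

open MvPolynomial

namespace Plane

variable {K : Type*} [Field K]

def line (a v : Fin 2 → K) : Set (Fin 2 → K) := {p | ∃ t : K, p = a + t • v}

def IsLine (L : Set (Fin 2 → K)) : Prop := ∃ a v, v ≠ 0 ∧ L = line a v

def cross (v w : Fin 2 → K) : K := v 0 * w 1 - v 1 * w 0

variable {a b p v w : Fin 2 → K}

lemma add_smul_mem_line (a v : Fin 2 → K) (t : K) : a + t • v ∈ line a v := ⟨t, rfl⟩

lemma add_smul_mem_line_of_mem (hp : p ∈ line a v) (t : K) : p + t • v ∈ line a v := by
  obtain ⟨s, rfl⟩ := hp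
  exact ⟨s + t, by rw [add_smul, add_assoc]⟩

lemma line_eq_of_mem (hp : p ∈ line a v) : line p v = line a v := by
  obtain ⟨s, rfl⟩ := hp
  ext x
  constructor
  · rintro ⟨t, rfl⟩
    exact ⟨s + t, by rw [add_smul, add_assoc]⟩
  · rintro ⟨t, rfl⟩
    exact ⟨t - s, by rw [sub_smul]; abel⟩

lemma line_smul (a v : Fin 2 → K) {c : K} (hc : c ≠ 0) : line a (c • v) = line a v := by
  ext x
  constructor
  · rintro ⟨t, rfl⟩
    exact ⟨t * c, by rw [smul_smul]⟩
  · rintro ⟨t, rfl⟩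
    exact ⟨t / c, by rw [smul_smul, div_mul_cancel₀ _ hc]⟩

lemma cross_smul_left (c : K) (v w : Fin 2 → K) : cross (c • v) w = c * cross v w := by
  simp only [cross, Pi.smul_apply, smul_eq_mul]
  ring

lemma cross_self (v : Fin 2 → K) : cross v v = 0 := by
  rw [cross, mul_comm, sub_self]

lemma cross_swap (v w : Fin 2 → K) : cross w v = -cross v w := by
  simp only [cross]
  ring

lemma exists_eq_smul_of_cross_eq_zero (hv : v ≠ 0) (h : cross v w = 0) : ∃ c : K, w = c • v := by
  obtain ⟨i, hi⟩ := Function.ne_iff.mp hv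
  refine ⟨w i / v i, funext fun j => ?_⟩
  simp only [cross] at h
  fin_cases i <;> fin_cases j <;>
    simp only [Fin.zero_eta, Fin.mk_one, Fin.isValue, Pi.zero_apply, ne_eq, Pi.smul_apply,
      smul_eq_mul] at hi ⊢ <;> field_simp <;>
      first | linear_combination h | linear_combination -h

lemma cross_ne_zero_of_not_parallel (hv : v ≠ 0) (hw : ¬∃ c : K, w = c • v) : cross v w ≠ 0 :=
  fun h => hw (exists_eq_smul_of_cross_eq_zero hv h)

lemma exists_cross_ne_zero (hv : v ≠ 0) : ∃ w, cross v w ≠ 0 := by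
  by_cases h0 : v 0 = 0
  · refine ⟨![1, 0], ?_⟩
    have h1 : v 1 ≠ 0 := fun h1 => hv (funext fun i => by fin_cases i <;> assumption)
    simpa [cross] using h1
  · exact ⟨![0, 1], by simpa [cross] using h0⟩

lemma line_eq_of_cross_eq_zero (a : Fin 2 → K) (hv : v ≠ 0) (hw : w ≠ 0) (h : cross v w = 0) :
    line a w = line a v := by
  obtain ⟨c, rfl⟩ := exists_eq_smul_of_cross_eq_zero hv h
  exact line_smul a v (left_ne_zero_of_smul hw)

/-- Cramer's rule. -/
lemma exists_add_smul_eq_add_smul (h : cross v w ≠ 0) (a b : Fin 2 → K) :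
    ∃ s t : K, a + s • v = b + t • w := by
  refine ⟨cross (b - a) w / cross v w, -(cross v (b - a) / cross v w), funext fun i => ?_⟩
  simp only [Pi.add_apply, Pi.smul_apply, smul_eq_mul]
  field_simp
  fin_cases i <;> simp [cross] <;> ring

lemma line_eq_line_sub_of_mem {y z : Fin 2 → K} (hy : y ∈ line a w)
    (hz : z ∈ line a w) (hyz : y ≠ z) : line a w = line z (y - z) := by
  obtain ⟨s, rfl⟩ := hy
  obtain ⟨t, rfl⟩ := hz
  have hst : s - t ≠ 0 := sub_ne_zero.mpr fun h => hyz (by rw [h])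
  have : a + s • w - (a + t • w) = (s - t) • w := by rw [sub_smul]; abel
  rw [this, line_smul _ _ hst, line_eq_of_mem (add_smul_mem_line a w t)]

section Restriction

variable {σ : Type*}

noncomputable def restrictLine (P : MvPolynomial σ K) (a v : σ → K) : Polynomial K :=
  aeval (fun i => Polynomial.C (a i) + Polynomial.X * Polynomial.C (v i)) P

lemma eval_restrictLine (P : MvPolynomial σ K) (a v : σ → K) (t : K) :
    (restrictLine P a v).eval t = eval (a + t • v) P := by
  rw [restrictLine, ← Polynomial.coe_aeval_eq_eval, ← AlgHom.comp_apply, comp_aeval,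
    aeval_eq_eval]
  congr 2
  funext i
  simp only [map_add, map_mul, Polynomial.aeval_C, Polynomial.aeval_X, Pi.add_apply,
    Pi.smul_apply, smul_eq_mul, Algebra.algebraMap_self, RingHom.id_apply]

lemma eval_add_smul_eq_of_infinite {P Q : MvPolynomial σ K} {a b v w : σ → K}
    (h : {t : K | eval (a + t • v) P = eval (b + t • w) Q}.Infinite) (t : K) :
    eval (a + t • v) P = eval (b + t • w) Q := by
  simp only [← eval_restrictLine] at h ⊢
  rw [Polynomial.eq_of_infinite_eval_eq _ _ h]

lemma eval_eq_of_forall_ne_zero [IsAlgClosed K] {P : MvPolynomial σ K} {a v : σ → K}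
    (h : ∀ t : K, eval (a + t • v) P ≠ 0) (t : K) : eval (a + t • v) P = eval a P := by
  have hdeg : (restrictLine P a v).degree ≤ 0 := by
    by_contra! hdeg
    obtain ⟨s, hs⟩ := IsAlgClosed.exists_root _ hdeg.ne'
    exact h s (by rw [← eval_restrictLine]; exact hs)
  have hconst (s : K) : eval (a + s • v) P = (restrictLine P a v).coeff 0 := by
    rw [← eval_restrictLine, Polynomial.eq_C_of_degree_le_zero hdeg, Polynomial.eval_C,
      Polynomial.coeff_C_zero]
  simpa using (hconst t).trans (hconst 0).symm

end Restriction

section Lines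

variable {P Q : MvPolynomial (Fin 2) K} {S : Set (Set (Fin 2 → K))}

variable (S) in
def parallelClass (v : Fin 2 → K) : Set (Set (Fin 2 → K)) := {L ∈ S | ∃ a, L = line a v}

lemma eval_eq_of_mem_line [IsAlgClosed K] (h : ∀ p ∈ line a v, eval p P ≠ 0) :
    ∀ p ∈ line a v, eval p P = eval a P := by
  rintro p ⟨t, rfl⟩
  exact eval_eq_of_forall_ne_zero (fun t => h _ ⟨t, rfl⟩) t

lemma eq_C_of_invariant_of_const_on_line [Infinite K]
    (hinv : ∀ (x : Fin 2 → K) (t : K), eval (x + t • v) P = eval x P) (hvw : cross v w ≠ 0)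
    (hb : ∀ t : K, eval (b + t • w) P = eval b P) : P = C (eval b P) := by
  refine MvPolynomial.funext fun x => ?_
  obtain ⟨s, t, hst⟩ := exists_add_smul_eq_add_smul hvw x b
  rw [eval_C, ← hinv x s, hst, hb]

lemma eval_add_smul_eq_of_infinite_parallel (hv : v ≠ 0) (hS : S.Infinite)
    (hconst : ∀ L ∈ S, ∃ a, L = line a v ∧ ∀ p ∈ L, eval p P = eval a P)
    (x : Fin 2 → K) (t : K) : eval (x + t • v) P = eval x P := by
  obtain ⟨u, hu⟩ := exists_cross_ne_zero hv
  have huv : cross u v ≠ 0 := by rwa [cross_swap, neg_ne_zero]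
  have hT : {s : K | ∃ L ∈ S, x + s • u ∈ L}.Infinite := by
    refine fun hT => hS ((hT.image fun s => line (x + s • u) v).subset fun L hL => ?_)
    obtain ⟨a, rfl, -⟩ := hconst L hL
    obtain ⟨s, r, hsr⟩ := exists_add_smul_eq_add_smul huv x a
    have hmem : x + s • u ∈ line a v := ⟨r, hsr⟩
    exact ⟨s, ⟨line a v, hL, hmem⟩, line_eq_of_mem hmem⟩
  have hT' : {s : K | eval (x + t • v + s • u) P = eval (x + s • u) P}.Infinite := by
    refine hT.mono ?_
    rintro s ⟨L, hL, hs⟩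
    obtain ⟨a, rfl, hLc⟩ := hconst L hL
    rw [Set.mem_ofPred, add_right_comm, hLc _ (add_smul_mem_line_of_mem hs t), hLc _ hs]
  simpa using eval_add_smul_eq_of_infinite hT' 0

lemma exists_infinite_concurrent (hS : S.Infinite) (hline : ∀ L ∈ S, IsLine L)
    (hfin : ∀ v ≠ 0, (parallelClass S v).Finite) (hzero : ∀ L ∈ S, ∀ p ∈ L, eval p Q = 0)
    {q e : Fin 2 → K} (hq : eval q Q ≠ 0) (he : e ≠ 0) :
    ∃ s : K, {L ∈ S | q + s • e ∈ L}.Infinite := by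
  have hZ : {s : K | eval (q + s • e) Q = 0}.Finite := by
    refine Set.not_infinite.mp fun hZ => hq ?_
    simpa using eval_add_smul_eq_of_infinite (P := Q) (Q := 0) (a := q) (b := q) (v := e) (w := e)
      (by simpa using hZ) 0
  by_contra! hcon
  refine ((hS.sdiff (hfin e he)).mono fun L hL => ?_) (hZ.biUnion fun s _ => hcon s)
  obtain ⟨hL, hLe⟩ := hL
  obtain ⟨a, w, hw, rfl⟩ := hline L hL
  have hew : cross e w ≠ 0 := fun h => hLe ⟨hL, a, line_eq_of_cross_eq_zero a he hw h⟩
  obtain ⟨s, r, hsr⟩ := exists_add_smul_eq_add_smul hew q a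
  have hmem : q + s • e ∈ line a w := ⟨r, hsr⟩
  exact Set.mem_biUnion (hzero _ hL _ hmem) ⟨hL, hmem⟩

/- Infinitely many of the lines pass through one point `z` of a transversal through `x`. Applied
again, to a transversal through `x` missing `z`, this makes infinitely many of them pass through
`z` and a second point `y`: impossible. -/
lemma eval_eq_zero_of_infinite (hS : S.Infinite) (hline : ∀ L ∈ S, IsLine L)
    (hfin : ∀ v ≠ 0, (parallelClass S v).Finite) (hzero : ∀ L ∈ S, ∀ p ∈ L, eval p Q = 0)
    (x : Fin 2 → K) : eval x Q = 0 := by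
  by_contra hx
  have he : (![1, 0] : Fin 2 → K) ≠ 0 := fun h => one_ne_zero (congrFun h 0)
  obtain ⟨s, hz⟩ := exists_infinite_concurrent hS hline hfin hzero hx he
  set z := x + s • ![1, 0]
  obtain ⟨L, hL, hzL⟩ := hz.nonempty
  have hzx : z - x ≠ 0 := sub_ne_zero.mpr fun h => hx (h ▸ hzero L hL z hzL)
  obtain ⟨e, hze⟩ := exists_cross_ne_zero hzx
  have he0 : e ≠ 0 := by
    rintro rfl
    simp [cross] at hze
  obtain ⟨s', hy⟩ := exists_infinite_concurrent hz (fun L hL => hline L hL.1)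
    (fun v hv => (hfin v hv).subset fun L hL => ⟨hL.1.1, hL.2⟩)
    (fun L hL => hzero L hL.1) hx he0
  set y := x + s' • e
  have hyz : y ≠ z := fun h => hze (by
    rw [← h, add_sub_cancel_left, cross_smul_left, cross_self, mul_zero])
  refine hy ((Set.finite_singleton (line z (y - z))).subset fun L hL => ?_)
  obtain ⟨⟨hL, hzL⟩, hyL⟩ := hL
  obtain ⟨a, w, -, rfl⟩ := hline L hL
  exact line_eq_line_sub_of_mem hyL hzL hyz

lemma exists_infinite_parallelClass [IsAlgClosed K] (hP : ¬∃ c, P = C c) (hS : S.Infinite)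
    (hmiss : ∀ L ∈ S, IsLine L ∧ ∀ p ∈ L, eval p P ≠ 0) :
    ∃ v ≠ 0, (parallelClass S v).Infinite := by
  by_contra! hfin
  obtain ⟨L₀, hL₀⟩ := hS.nonempty
  obtain ⟨⟨a₀, v₀, hv₀, rfl⟩, hne₀⟩ := hmiss _ hL₀
  have hzero : ∀ L ∈ S \ parallelClass S v₀, ∀ p ∈ L, eval p (P - C (eval a₀ P)) = 0 := by
    rintro L ⟨hL, hLv₀⟩ p hp
    obtain ⟨⟨a, w, hw, rfl⟩, hne⟩ := hmiss _ hL
    have hvw : cross v₀ w ≠ 0 := fun h => hLv₀ ⟨hL, a, line_eq_of_cross_eq_zero a hv₀ hw h⟩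
    obtain ⟨s, r, hsr⟩ := exists_add_smul_eq_add_smul hvw a₀ a
    rw [eval_sub, eval_C, sub_eq_zero, eval_eq_of_mem_line hne p hp,
      ← eval_eq_of_mem_line hne _ ⟨r, rfl⟩, ← hsr, eval_eq_of_mem_line hne₀ _ ⟨s, rfl⟩]
  refine hP ⟨eval a₀ P, sub_eq_zero.mp (MvPolynomial.funext fun x => ?_)⟩
  simpa using eval_eq_zero_of_infinite (hS.sdiff (hfin v₀ hv₀)) (fun L hL => (hmiss L hL.1).1)
    (fun v hv => (hfin v hv).subset fun L hL => ⟨hL.1.1, hL.2⟩) hzero x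

end Lines

end Plane

open Plane

theorem stmt_2 (P : MvPolynomial (Fin 2) ℂ) (hnc : ¬∃ c : ℂ, P = MvPolynomial.C c) :
    {L : Set (Fin 2 → ℂ) | IsComplexLine L ∧ ∀ p ∈ L, MvPolynomial.eval p P ≠ 0}.Finite ∨
    ∃ v : Fin 2 → ℂ, v ≠ 0 ∧
      (∀ (b : Fin 2 → ℂ) (t : ℂ), MvPolynomial.eval (b + t • v) P = MvPolynomial.eval b P) ∧
      (∀ b w : Fin 2 → ℂ, w ≠ 0 → (¬∃ c : ℂ, w = c • v) →
        ∃ t : ℂ, MvPolynomial.eval (b + t • w) P = 0) := by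
  refine or_iff_not_imp_left.mpr fun hS => ?_
  obtain ⟨v, hv, hclass⟩ := exists_infinite_parallelClass hnc hS fun L hL => hL
  have hinv := eval_add_smul_eq_of_infinite_parallel hv hclass fun L hL => by
    obtain ⟨⟨-, hne⟩, a, rfl⟩ := hL
    exact ⟨a, rfl, eval_eq_of_mem_line hne⟩
  refine ⟨v, hv, hinv, fun b w _ hwv => ?_⟩
  by_contra! hne
  exact hnc ⟨_, eq_C_of_invariant_of_const_on_line hinv (cross_ne_zero_of_not_parallel hv hwv)
    (eval_eq_of_forall_ne_zero hne)⟩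
end
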